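/- Let k ≥ 4 be an even integer, p a prime, ε ∈ {+1, −1}, and ℓ ≥ 5 a prime with ε·p^{k/2} ≡ −1 (mod ℓ). Set r = gcd(ℓ−1, k−1), let g₁ be the multiplicative order of p^r modulo ℓ, and put μ_p = ℓ if g₁ = 1 and μ_p = g₁ otherwise. Define 𝔣(n) = σ_{k−1}(n) + ε·p^{k/2}·σ_{k−1}(n/p) (with σ_{k−1}(n/p) = 0 if p ∤ n), and let S₁ = {n ≥ 1 : ℓ ∤ σ_r(n)} and S₂ = {n ≥ 1 : ℓ ∤ 𝔣(n)}. Suppose that for some real numbers α ≠ 0 and γ₁, the function s ↦ L′_{S₁}(s)/L_{S₁}(s) + α/(s−1) tends to γ₁ as s → 1⁺. Then s ↦ L′_{S₂}(s)/L_{S₂}(s) + α/(s−1) tends to γ₁ + (log p)·(μ_p/(p^{μ_p} − 1) − (μ_p − 1)/(p^{μ_p−1} − 1)) as s → 1⁺. -/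

import Mathlib

open Filter Topology

/-- `mySigma m n = ∑_{d ∣ n} d^m`, the sum of `m`-th powers of the divisors of `n`. -/
def mySigma (m n : ℕ) : ℕ := ∑ d ∈ n.divisors, d ^ m

/-- `frak k p ε n = σ_{k-1}(n) + ε p^{k/2} σ_{k-1}(n/p)`, where the last term is `0`
if `p ∤ n`. -/
def frak (k p : ℕ) (ε : ℤ) (n : ℕ) : ℤ :=
  (mySigma (k - 1) n : ℤ) +
    ε * (p : ℤ) ^ (k / 2) * (if p ∣ n then (mySigma (k - 1) (n / p) : ℤ) else 0)

/-- The Dirichlet series `L_S(s) = ∑_{n ∈ S} n^{-s}` of a set `S` of natural numbers. -/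
noncomputable def Lfun (S : Set ℕ) (s : ℝ) : ℝ := ∑' n : S, ((n : ℕ) : ℝ) ^ (-s)

/-!
Write `n = p^a m` with `p ∤ m`. The congruence `ε p^(k/2) ≡ -1 (mod ℓ)` makes `𝔣(p^a m)` congruent
to `p^(a(k-1)) σ_{k-1}(m)`, and `ℓ ∣ σ_{k-1}(m) ↔ ℓ ∣ σ_r(m)` because only the orders of primes
modulo `ℓ` matter. On the other hand `ℓ ∣ σ_r(p^a m)` iff `μ_p ∣ a + 1` or `ℓ ∣ σ_r(m)`. So both
series are a geometric series in `p^(-s)` times the same series over the `m`, and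
`L_{S₂}(s) = (1 - p^(-μs)) / (1 - p^(-(μ-1)s)) · L_{S₁}(s)`. The logarithmic derivatives therefore
differ by that of this factor, which is continuous at `s = 1` with the stated value.
-/

open ArithmeticFunction Finset
open scoped ArithmeticFunction.sigma

theorem mySigma_eq_sigma (m n : ℕ) : mySigma m n = σ m n := by
  rw [sigma_apply]; rfl

/-- The least `n > 0` with `1 + y + ⋯ + y ^ (n - 1) = 0` in `ZMod ℓ` (`0` if there is none);
for `y = p ^ r` this is the paper's `μ_p`. -/
noncomputable def geomSumPeriod {ℓ : ℕ} (y : ZMod ℓ) : ℕ :=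
  if orderOf y = 1 then ℓ else orderOf y

section GeomSumPeriod

variable {ℓ : ℕ} [Fact ℓ.Prime]

theorem geom_sum_eq_zero_iff_geomSumPeriod_dvd (y : ZMod ℓ) (n : ℕ) :
    ∑ i ∈ range n, y ^ i = 0 ↔ geomSumPeriod y ∣ n := by
  rw [geomSumPeriod]
  by_cases hy : y = 1
  · simp [hy, ZMod.natCast_eq_zero_iff]
  · rw [if_neg (mt orderOf_eq_one_iff.mp hy), geom_sum_eq hy, div_eq_zero_iff,
      sub_eq_zero, sub_eq_zero, or_iff_left hy, orderOf_dvd_iff_pow_eq_one]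

theorem one_lt_geomSumPeriod {y : ZMod ℓ} (hy : y ≠ 0) : 1 < geomSumPeriod y := by
  have hℓ : ℓ.Prime := Fact.out
  rw [geomSumPeriod]
  split_ifs with h
  · exact hℓ.one_lt
  · have := (isOfFinOrder_iff_pow_eq_one.mpr
      ⟨ℓ - 1, Nat.sub_pos_of_lt hℓ.one_lt, ZMod.pow_card_sub_one_eq_one hy⟩).orderOf_pos
    omega

theorem orderOf_pow_gcd_card_sub_one (y : ZMod ℓ) {m : ℕ} (hm : m ≠ 0) :
    orderOf (y ^ Nat.gcd (ℓ - 1) m) = orderOf (y ^ m) := by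
  have hg : Nat.gcd (ℓ - 1) m ≠ 0 := Nat.gcd_ne_zero_right hm
  rcases eq_or_ne y 0 with rfl | hy
  · rw [zero_pow hm, zero_pow hg]
  rw [orderOf_pow' y hm, orderOf_pow' y hg, ← Nat.gcd_assoc,
    Nat.gcd_eq_left (ZMod.orderOf_dvd_card_sub_one hy)]

theorem geomSumPeriod_pow_gcd_card_sub_one (y : ZMod ℓ) {m : ℕ} (hm : m ≠ 0) :
    geomSumPeriod (y ^ Nat.gcd (ℓ - 1) m) = geomSumPeriod (y ^ m) := by
  simp only [geomSumPeriod, orderOf_pow_gcd_card_sub_one y hm]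

end GeomSumPeriod

theorem natCast_sigma_prime_pow {R : Type*} [Semiring R] {q : ℕ} (hq : q.Prime) (m a : ℕ) :
    (σ m (q ^ a) : R) = ∑ i ∈ range (a + 1), ((q : R) ^ m) ^ i := by
  rw [sigma_apply_prime_pow hq]
  push_cast
  simp only [← pow_mul, mul_comm]

theorem prime_dvd_sigma_prime_pow_iff {ℓ : ℕ} [Fact ℓ.Prime] {q : ℕ} (hq : q.Prime) (m a : ℕ) :
    ℓ ∣ σ m (q ^ a) ↔ geomSumPeriod ((q : ZMod ℓ) ^ m) ∣ a + 1 := by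
  rw [← ZMod.natCast_eq_zero_iff, natCast_sigma_prime_pow hq,
    geom_sum_eq_zero_iff_geomSumPeriod_dvd]

theorem prime_dvd_sigma_pow_mul_iff {ℓ : ℕ} [Fact ℓ.Prime] {p m : ℕ} (hp : p.Prime)
    (hm : ¬ p ∣ m) (j a : ℕ) :
    ℓ ∣ σ j (p ^ a * m) ↔ geomSumPeriod ((p : ZMod ℓ) ^ j) ∣ a + 1 ∨ ℓ ∣ σ j m := by
  rw [isMultiplicative_sigma.map_mul_of_coprime ((hp.coprime_iff_not_dvd.mpr hm).pow_left a),
    (Fact.out : ℓ.Prime).dvd_mul, prime_dvd_sigma_prime_pow_iff hp]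

theorem ArithmeticFunction.IsMultiplicative.prime_dvd_iff_of_prime_pow
    {f g : ArithmeticFunction ℕ} (hf : f.IsMultiplicative) (hg : g.IsMultiplicative)
    {ℓ : ℕ} (hℓ : ℓ.Prime) (h : ∀ q a, q.Prime → (ℓ ∣ f (q ^ a) ↔ ℓ ∣ g (q ^ a))) (n : ℕ) :
    ℓ ∣ f n ↔ ℓ ∣ g n := by
  induction n using Nat.recOnPosPrimePosCoprime with
  | prime_pow q a hq _ => exact h q a hq
  | zero => simp
  | one => simp [hf.map_one, hg.map_one, hℓ.not_dvd_one]
  | coprime a b _ _ hab iha ihb =>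
    rw [hf.map_mul_of_coprime hab, hg.map_mul_of_coprime hab, hℓ.dvd_mul, hℓ.dvd_mul, iha, ihb]

/-- Only the order of `q` modulo `ℓ` matters, and it divides `ℓ - 1`. -/
theorem prime_dvd_sigma_gcd_card_sub_one_iff {ℓ : ℕ} (hℓ : ℓ.Prime) {m : ℕ} (hm : m ≠ 0)
    (n : ℕ) : ℓ ∣ σ (Nat.gcd (ℓ - 1) m) n ↔ ℓ ∣ σ m n := by
  have := Fact.mk hℓ
  refine isMultiplicative_sigma.prime_dvd_iff_of_prime_pow isMultiplicative_sigma hℓ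
    (fun q a hq => ?_) n
  rw [prime_dvd_sigma_prime_pow_iff hq, prime_dvd_sigma_prime_pow_iff hq,
    geomSumPeriod_pow_gcd_card_sub_one _ hm]

/-- Since `σ(p^(a+1)) = σ(p^a) + p^((a+1)(k-1))`, the condition `ε p^(k/2) = -1` telescopes
`frak` at `p^(a+1) m` down to its last term. -/
theorem intCast_frak_pow_mul {R : Type*} [CommRing R] {k p : ℕ} {ε : ℤ}
    (hE : (ε : R) * (p : R) ^ (k / 2) = -1) (hp : p.Prime) {m : ℕ} (hm : ¬ p ∣ m) (a : ℕ) :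
    (frak k p ε (p ^ a * m) : R) = ((p : R) ^ (k - 1)) ^ a * σ (k - 1) m := by
  have hcop (c : ℕ) : Nat.Coprime (p ^ c) m := (hp.coprime_iff_not_dvd.mpr hm).pow_left c
  rcases a with _ | b
  · simp [frak, hm, mySigma_eq_sigma]
  have hquot : p ^ (b + 1) * m / p = p ^ b * m := by
    rw [pow_succ, mul_right_comm, Nat.mul_div_cancel _ hp.pos]
  rw [frak, if_pos (dvd_mul_of_dvd_left (dvd_pow_self p b.succ_ne_zero) m), hquot]
  simp only [mySigma_eq_sigma, isMultiplicative_sigma.map_mul_of_coprime (hcop _)]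
  push_cast
  rw [natCast_sigma_prime_pow hp, natCast_sigma_prime_pow hp, sum_range_succ]
  linear_combination (∑ i ∈ range (b + 1), ((p : R) ^ (k - 1)) ^ i) * (σ (k - 1) m : R) * hE

theorem int_dvd_frak_pow_mul_iff {ℓ k p m : ℕ} [Fact ℓ.Prime] {ε : ℤ}
    (hE : (ε : ZMod ℓ) * (p : ZMod ℓ) ^ (k / 2) = -1) (hp0 : (p : ZMod ℓ) ≠ 0) (hp : p.Prime)
    (hm : ¬ p ∣ m) (a : ℕ) : (ℓ : ℤ) ∣ frak k p ε (p ^ a * m) ↔ ℓ ∣ σ (k - 1) m := by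
  rw [← ZMod.intCast_zmod_eq_zero_iff_dvd, intCast_frak_pow_mul hE hp hm, mul_eq_zero,
    ZMod.natCast_eq_zero_iff, or_iff_right (pow_ne_zero _ (pow_ne_zero _ hp0))]

theorem injOn_pow_mul {p : ℕ} (hp : p.Prime) :
    Set.InjOn (fun x : ℕ × ℕ => p ^ x.1 * x.2) {x | ¬ p ∣ x.2} := by
  have hval {a m : ℕ} (hm : ¬ p ∣ m) : (p ^ a * m).factorization p = a := by
    rw [Nat.factorization_mul (pow_ne_zero a hp.ne_zero) (by rintro rfl; exact hm (dvd_zero p)),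
      Finsupp.add_apply, hp.factorization_pow, Finsupp.single_eq_same,
      Nat.factorization_eq_zero_of_not_dvd hm, add_zero]
  rintro ⟨a, m⟩ hm ⟨b, m'⟩ hm' h
  simp only at h hm hm'
  obtain rfl : a = b := by rw [← hval (a := a) hm, ← hval (a := b) hm', h]
  rw [Nat.eq_of_mul_eq_mul_left (pow_pos hp.pos a) h]

theorem setOf_pos_eq_image2_pow_mul {p : ℕ} (hp : p.Prime) {Q R : ℕ → Prop} {A : Set ℕ}
    (hQ : ∀ a m, ¬ p ∣ m → (Q (p ^ a * m) ↔ a ∈ A ∧ R m)) :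
    {n | 1 ≤ n ∧ Q n} = Set.image2 (fun a m => p ^ a * m) A {m | ¬ p ∣ m ∧ R m} := by
  ext n
  constructor
  · rintro ⟨hn, hQn⟩
    obtain ⟨a, m, hm, rfl⟩ :=
      Nat.exists_eq_pow_mul_and_not_dvd (Nat.one_le_iff_ne_zero.mp hn) p hp.ne_one
    obtain ⟨ha, hR⟩ := (hQ a m hm).mp hQn
    exact ⟨a, ha, m, ⟨hm, hR⟩, rfl⟩
  · rintro ⟨a, ha, m, ⟨hm, hR⟩, rfl⟩
    have hm0 : m ≠ 0 := by rintro rfl; exact hm (dvd_zero p)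
    exact ⟨Nat.one_le_iff_ne_zero.mpr (mul_ne_zero (pow_ne_zero a hp.ne_zero) hm0),
      (hQ a m hm).mpr ⟨ha, hR⟩⟩

theorem tsum_univ_pow {x : ℝ} (h0 : 0 ≤ x) (h1 : x < 1) :
    ∑' a : (Set.univ : Set ℕ), x ^ (a : ℕ) = (1 - x)⁻¹ := by
  rw [tsum_univ (fun a : ℕ => x ^ a), tsum_geometric_of_lt_one h0 h1]

theorem tsum_pow_not_dvd_succ {x : ℝ} (h0 : 0 ≤ x) (h1 : x < 1) (n : ℕ) :
    ∑' a : {a : ℕ | ¬ n + 1 ∣ a + 1}, x ^ (a : ℕ) =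
      (1 - x ^ n) / ((1 - x) * (1 - x ^ (n + 1))) := by
  have hgeom := summable_geometric_of_lt_one h0 h1
  have hxn : x ^ (n + 1) < 1 := pow_lt_one₀ h0 h1 n.succ_ne_zero
  have hD : {a : ℕ | n + 1 ∣ a + 1} = Set.range fun j => (n + 1) * j + n := by
    ext a
    constructor
    · rintro ⟨_ | t, ht⟩
      · omega
      · exact ⟨t, show (n + 1) * t + n = a by rw [mul_add_one] at ht; omega⟩
    · rintro ⟨j, rfl⟩
      exact ⟨j + 1, by ring⟩
  have hterm (j : ℕ) : x ^ ((n + 1) * j + n) = (x ^ (n + 1)) ^ j * x ^ n := by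
    rw [pow_add, pow_mul]
  have hDsum : ∑' a : {a : ℕ | n + 1 ∣ a + 1}, x ^ (a : ℕ) = x ^ n * (1 - x ^ (n + 1))⁻¹ := by
    rw [hD, tsum_range (fun a : ℕ => x ^ a) fun i j h => by simpa using h, tsum_congr hterm,
      tsum_mul_right, tsum_geometric_of_lt_one (by positivity) hxn, mul_comm]
  have hsplit := Summable.tsum_add_tsum_compl (f := fun a : ℕ => x ^ a)
    (s := {a : ℕ | n + 1 ∣ a + 1}) (hgeom.subtype _) (hgeom.subtype _)
  rw [hDsum, tsum_geometric_of_lt_one h0 h1] at hsplit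
  have hne : 1 - x ≠ 0 := by linarith
  have hne' : 1 - x ^ (n + 1) ≠ 0 := by linarith
  rw [show {a : ℕ | ¬ n + 1 ∣ a + 1} = {a : ℕ | n + 1 ∣ a + 1}ᶜ from rfl,
    eq_div_iff (mul_ne_zero hne hne')]
  field_simp at hsplit
  linear_combination hsplit

theorem summable_Lfun (S : Set ℕ) {s : ℝ} (hs : 1 < s) :
    Summable (fun n : S => ((n : ℕ) : ℝ) ^ (-s)) :=
  (Real.summable_nat_rpow.mpr (by linarith)).subtype S

theorem one_le_Lfun {S : Set ℕ} (h1 : 1 ∈ S) {s : ℝ} (hs : 1 < s) : 1 ≤ Lfun S s := by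
  simpa [Lfun] using (summable_Lfun S hs).le_tsum ⟨1, h1⟩ fun _ _ => by positivity

theorem Lfun_image2_pow_mul {p : ℕ} (hp : p.Prime) (A : Set ℕ) {C : Set ℕ}
    (hC : ∀ m ∈ C, ¬ p ∣ m) {s : ℝ} (hs : 1 < s) :
    Lfun (Set.image2 (fun a m => p ^ a * m) A C) s =
      (∑' a : A, ((p : ℝ) ^ (-s)) ^ (a : ℕ)) * Lfun C s := by
  have hx : 0 ≤ (p : ℝ) ^ (-s) := by positivity
  have hx1 : (p : ℝ) ^ (-s) < 1 :=
    Real.rpow_lt_one_of_one_lt_of_neg (by exact_mod_cast hp.one_lt) (by linarith)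
  have hgeom : Summable fun a : A => ‖((p : ℝ) ^ (-s)) ^ (a : ℕ)‖ :=
    summable_norm_iff.mpr ((summable_geometric_of_lt_one hx hx1).subtype A)
  rw [Lfun, ← Set.image_prod, tsum_image (fun n : ℕ => (n : ℝ) ^ (-s))
      ((injOn_pow_mul hp).mono fun x hx => hC x.2 (Set.mem_prod.mp hx).2),
    ← (Equiv.Set.prod A C).symm.tsum_eq, Lfun,
    tsum_mul_tsum_of_summable_norm hgeom (summable_norm_iff.mpr (summable_Lfun C hs))]
  refine tsum_congr fun x => ?_
  show ((p ^ (x.1 : ℕ) * (x.2 : ℕ) : ℕ) : ℝ) ^ (-s) = _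
  push_cast
  rw [Real.mul_rpow (by positivity) (by positivity), Real.rpow_pow_comm (by positivity)]

theorem Lfun_image2_univ_eq_mul {p : ℕ} (hp : p.Prime) {C : Set ℕ} (hC : ∀ m ∈ C, ¬ p ∣ m)
    {n : ℕ} (hn : n ≠ 0) {s : ℝ} (hs : 1 < s) :
    Lfun (Set.image2 (fun a m => p ^ a * m) Set.univ C) s =
      (1 - ((p : ℝ) ^ (n + 1)) ^ (-s)) / (1 - ((p : ℝ) ^ n) ^ (-s)) *
        Lfun (Set.image2 (fun a m => p ^ a * m) {a | ¬ n + 1 ∣ a + 1} C) s := by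
  have hx : 0 ≤ (p : ℝ) ^ (-s) := by positivity
  have hx1 : (p : ℝ) ^ (-s) < 1 :=
    Real.rpow_lt_one_of_one_lt_of_neg (by exact_mod_cast hp.one_lt) (by linarith)
  have hne : 1 - (p : ℝ) ^ (-s) ≠ 0 := by linarith
  have hne₁ : 1 - ((p : ℝ) ^ (-s)) ^ (n + 1) ≠ 0 := by
    linarith [pow_lt_one₀ hx hx1 n.add_one_ne_zero]
  have hne₂ : 1 - ((p : ℝ) ^ (-s)) ^ n ≠ 0 := by linarith [pow_lt_one₀ hx hx1 hn]
  rw [Lfun_image2_pow_mul hp _ hC hs, Lfun_image2_pow_mul hp _ hC hs, tsum_univ_pow hx hx1,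
    tsum_pow_not_dvd_succ hx hx1, ← Real.rpow_pow_comm (by positivity),
    ← Real.rpow_pow_comm (by positivity)]
  field_simp

theorem ofReal_Lfun (S : Set ℕ) {s : ℝ} (hs : s ≠ 0) :
    (Lfun S s : ℂ) = LSeries (fun n => ((S.indicator 1 n : ℝ) : ℂ)) s := by
  rw [Lfun, tsum_subtype S (fun n : ℕ => (n : ℝ) ^ (-s)), LSeries, Complex.ofReal_tsum]
  refine tsum_congr fun n => ?_
  rcases eq_or_ne n 0 with rfl | hn
  · simp [Real.zero_rpow (neg_ne_zero.mpr hs)]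
  by_cases h : n ∈ S <;>
    simp [h, hn, LSeries.term_of_ne_zero, Real.rpow_neg, Complex.ofReal_cpow]

theorem differentiableAt_Lfun (S : Set ℕ) {s : ℝ} (hs : 1 < s) :
    DifferentiableAt ℝ (Lfun S) s := by
  have habs :
      LSeries.abscissaOfAbsConv (fun n => ((S.indicator 1 n : ℝ) : ℂ)) < (s : ℂ).re := by
    refine (LSeries.abscissaOfAbsConv_le_of_le_const ⟨1, fun n _ => ?_⟩).trans_lt
      (by exact_mod_cast hs)
    by_cases h : n ∈ S <;> simp [h]
  refine (LSeries_hasDerivAt habs).real_of_complex.differentiableAt.congr_of_eventuallyEq ?_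
  filter_upwards [lt_mem_nhds (zero_lt_one.trans hs)] with t ht
  rw [← ofReal_Lfun S ht.ne', Complex.ofReal_re]

theorem hasDerivAt_one_sub_rpow_neg {q : ℝ} (hq : 0 < q) (s : ℝ) :
    HasDerivAt (fun s => 1 - q ^ (-s)) (Real.log q * q ^ (-s)) s := by
  simpa [mul_comm] using ((Real.hasStrictDerivAt_const_rpow hq (-s)).hasDerivAt.comp s
    (hasDerivAt_neg s)).const_sub 1

theorem one_sub_rpow_neg_pos {q s : ℝ} (hq : 1 < q) (hs : 0 < s) : 0 < 1 - q ^ (-s) := by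
  linarith [Real.rpow_lt_one_of_one_lt_of_neg hq (neg_lt_zero.mpr hs)]

theorem logDeriv_one_sub_rpow_neg {q : ℝ} (hq : 0 < q) (s : ℝ) :
    logDeriv (fun s => 1 - q ^ (-s)) s = Real.log q / (q ^ s - 1) := by
  have hqs : q ^ s ≠ 0 := (Real.rpow_pos_of_pos hq s).ne'
  rw [logDeriv_apply, (hasDerivAt_one_sub_rpow_neg hq s).deriv, Real.rpow_neg hq.le,
    show 1 - (q ^ s)⁻¹ = (q ^ s - 1) / q ^ s by field_simp]
  field_simp

theorem tendsto_logDeriv_one_sub_rpow_neg_div {q₁ q₂ : ℝ} (h₁ : 1 < q₁) (h₂ : 1 < q₂) :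
    Tendsto (logDeriv fun s : ℝ => (1 - q₁ ^ (-s)) / (1 - q₂ ^ (-s))) (𝓝[>] 1)
      (𝓝 (Real.log q₁ / (q₁ - 1) - Real.log q₂ / (q₂ - 1))) := by
  have hcont : ContinuousAt
      (fun s : ℝ => Real.log q₁ / (q₁ ^ s - 1) - Real.log q₂ / (q₂ ^ s - 1)) 1 := by
    refine ContinuousAt.sub (continuousAt_const.div ?_ ?_) (continuousAt_const.div ?_ ?_)
    all_goals first
      | exact ((Real.continuousAt_const_rpow (by linarith)).sub continuousAt_const)
      | simp only [Real.rpow_one]; linarith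
  have hlim := hcont.tendsto.mono_left (nhdsWithin_le_nhds (s := Set.Ioi 1))
  simp only [Real.rpow_one] at hlim
  refine hlim.congr' ?_
  filter_upwards [self_mem_nhdsWithin] with s hs
  have hs0 : (0 : ℝ) < s := zero_lt_one.trans hs
  rw [logDeriv_div s (one_sub_rpow_neg_pos h₁ hs0).ne' (one_sub_rpow_neg_pos h₂ hs0).ne'
      (hasDerivAt_one_sub_rpow_neg (by linarith) s).differentiableAt
      (hasDerivAt_one_sub_rpow_neg (by linarith) s).differentiableAt,
    logDeriv_one_sub_rpow_neg (by linarith), logDeriv_one_sub_rpow_neg (by linarith)]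

theorem tendsto_logDeriv_add_of_eq_mul {L₁ L₂ G φ : ℝ → ℝ} {γ c : ℝ}
    (hL : ∀ s, 1 < s → L₂ s = G s * L₁ s)
    (hG : ∀ s, 1 < s → DifferentiableAt ℝ G s ∧ G s ≠ 0)
    (hL₁ : ∀ s, 1 < s → DifferentiableAt ℝ L₁ s ∧ L₁ s ≠ 0)
    (h₁ : Tendsto (fun s => deriv L₁ s / L₁ s + φ s) (𝓝[>] 1) (𝓝 γ))
    (hGc : Tendsto (logDeriv G) (𝓝[>] 1) (𝓝 c)) :
    Tendsto (fun s => deriv L₂ s / L₂ s + φ s) (𝓝[>] 1) (𝓝 (γ + c)) := by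
  refine (h₁.add hGc).congr' ?_
  filter_upwards [self_mem_nhdsWithin] with s hs
  have hLs : L₂ =ᶠ[𝓝 s] fun t => G t * L₁ t := eventually_of_mem (lt_mem_nhds hs) hL
  obtain ⟨hGd, hG0⟩ := hG s hs
  obtain ⟨hL₁d, hL₁0⟩ := hL₁ s hs
  have hmul := logDeriv_mul s hG0 hL₁0 hGd hL₁d
  rw [← (logDeriv_congr_nhds hLs).self_of_nhds] at hmul
  simp only [logDeriv_apply] at hmul ⊢
  rw [hmul]
  ring

theorem stmt13_general (k p ℓ : ℕ) (hk : 4 ≤ k) (hp : p.Prime)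
    (ε : ℤ) (hℓ : ℓ.Prime)
    (hcong : ε * (p : ℤ) ^ (k / 2) ≡ -1 [ZMOD (ℓ : ℤ)])
    (r : ℕ) (hr : r = Nat.gcd (ℓ - 1) (k - 1))
    (g₁ : ℕ) (hg₁ : g₁ = orderOf ((p : ZMod ℓ) ^ r))
    (μ : ℕ) (hμ : μ = if g₁ = 1 then ℓ else g₁)
    (S₁ S₂ : Set ℕ)
    (hS₁ : S₁ = {n : ℕ | 1 ≤ n ∧ ¬ ℓ ∣ mySigma r n})
    (hS₂ : S₂ = {n : ℕ | 1 ≤ n ∧ ¬ (ℓ : ℤ) ∣ frak k p ε n})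
    (α γ₁ : ℝ)
    (hlim : Tendsto (fun s : ℝ => deriv (Lfun S₁) s / Lfun S₁ s + α / (s - 1))
      (𝓝[>] (1 : ℝ)) (𝓝 γ₁)) :
    Tendsto (fun s : ℝ => deriv (Lfun S₂) s / Lfun S₂ s + α / (s - 1))
      (𝓝[>] (1 : ℝ))
      (𝓝 (γ₁ + Real.log p * ((μ : ℝ) / ((p : ℝ) ^ μ - 1)
        - ((μ : ℝ) - 1) / ((p : ℝ) ^ ((μ : ℝ) - 1) - 1)))) := by
  have := Fact.mk hℓ
  have hE : (ε : ZMod ℓ) * (p : ZMod ℓ) ^ (k / 2) = -1 := by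
    simpa using (ZMod.intCast_eq_intCast_iff _ _ _).mpr hcong
  have hp0 : (p : ZMod ℓ) ≠ 0 := by
    rintro h
    simp [h, zero_pow (show k / 2 ≠ 0 by omega)] at hE
  have hμ' : geomSumPeriod ((p : ZMod ℓ) ^ r) = μ := by rw [hμ, hg₁]; rfl
  have hμ1 : 1 < μ := hμ' ▸ one_lt_geomSumPeriod (pow_ne_zero r hp0)
  obtain ⟨n, rfl⟩ : ∃ n, μ = n + 1 := ⟨μ - 1, by omega⟩
  have hn : n ≠ 0 := by omega
  have hS₁' : S₁ = Set.image2 (fun a m => p ^ a * m) {a | ¬ n + 1 ∣ a + 1}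
      {m | ¬ p ∣ m ∧ ¬ ℓ ∣ mySigma r m} := by
    refine hS₁.trans (setOf_pos_eq_image2_pow_mul hp fun a m hm => ?_)
    rw [mySigma_eq_sigma, mySigma_eq_sigma, prime_dvd_sigma_pow_mul_iff hp hm, hμ', not_or]
    rfl
  have hS₂' : S₂ = Set.image2 (fun a m => p ^ a * m) Set.univ
      {m | ¬ p ∣ m ∧ ¬ ℓ ∣ mySigma r m} := by
    refine hS₂.trans (setOf_pos_eq_image2_pow_mul hp fun a m hm => ?_)
    rw [int_dvd_frak_pow_mul_iff hE hp0 hp hm, mySigma_eq_sigma, hr,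
      prime_dvd_sigma_gcd_card_sub_one_iff hℓ (by omega)]
    simp
  have hP : 1 < (p : ℝ) := by exact_mod_cast hp.one_lt
  have hq₁ : 1 < (p : ℝ) ^ (n + 1) := one_lt_pow₀ hP n.add_one_ne_zero
  have hq₂ : 1 < (p : ℝ) ^ n := one_lt_pow₀ hP hn
  set G : ℝ → ℝ := fun s => (1 - ((p : ℝ) ^ (n + 1)) ^ (-s)) / (1 - ((p : ℝ) ^ n) ^ (-s))
  have hL (s : ℝ) (hs : 1 < s) : Lfun S₂ s = G s * Lfun S₁ s := by
    rw [hS₁', hS₂']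
    exact Lfun_image2_univ_eq_mul hp (fun m hm => hm.1) hn hs
  have hG (s : ℝ) (hs : 1 < s) : DifferentiableAt ℝ G s ∧ G s ≠ 0 := by
    have h₁ := one_sub_rpow_neg_pos hq₁ (zero_lt_one.trans hs)
    have h₂ := one_sub_rpow_neg_pos hq₂ (zero_lt_one.trans hs)
    exact ⟨(hasDerivAt_one_sub_rpow_neg (by positivity) s).differentiableAt.div
      (hasDerivAt_one_sub_rpow_neg (by positivity) s).differentiableAt h₂.ne',
      (div_pos h₁ h₂).ne'⟩
  have h1S₁ : 1 ∈ S₁ := by simp [hS₁, mySigma, hℓ.ne_one]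
  have hL₁ (s : ℝ) (hs : 1 < s) : DifferentiableAt ℝ (Lfun S₁) s ∧ Lfun S₁ s ≠ 0 :=
    ⟨differentiableAt_Lfun S₁ hs, (zero_lt_one.trans_le (one_le_Lfun h1S₁ hs)).ne'⟩
  convert tendsto_logDeriv_add_of_eq_mul hL hG hL₁ hlim
    (tendsto_logDeriv_one_sub_rpow_neg_div hq₁ hq₂) using 3
  rw [Real.log_pow, Real.log_pow, Nat.cast_add_one, add_sub_cancel_right, Real.rpow_natCast]
  ring

theorem stmt13 (k p ℓ : ℕ) (hk : 4 ≤ k) (hke : Even k) (hp : p.Prime)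
    (ε : ℤ) (hε : ε = 1 ∨ ε = -1) (hℓ : ℓ.Prime) (hℓ5 : 5 ≤ ℓ)
    (hcong : ε * (p : ℤ) ^ (k / 2) ≡ -1 [ZMOD (ℓ : ℤ)])
    (r : ℕ) (hr : r = Nat.gcd (ℓ - 1) (k - 1))
    (g₁ : ℕ) (hg₁ : g₁ = orderOf ((p : ZMod ℓ) ^ r))
    (μ : ℕ) (hμ : μ = if g₁ = 1 then ℓ else g₁)
    (S₁ S₂ : Set ℕ)
    (hS₁ : S₁ = {n : ℕ | 1 ≤ n ∧ ¬ ℓ ∣ mySigma r n})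
    (hS₂ : S₂ = {n : ℕ | 1 ≤ n ∧ ¬ (ℓ : ℤ) ∣ frak k p ε n})
    (α γ₁ : ℝ) (hα : α ≠ 0)
    (hlim : Tendsto (fun s : ℝ => deriv (Lfun S₁) s / Lfun S₁ s + α / (s - 1))
      (𝓝[>] (1 : ℝ)) (𝓝 γ₁)) :
    Tendsto (fun s : ℝ => deriv (Lfun S₂) s / Lfun S₂ s + α / (s - 1))
      (𝓝[>] (1 : ℝ))
      (𝓝 (γ₁ + Real.log p * ((μ : ℝ) / ((p : ℝ) ^ μ - 1)
        - ((μ : ℝ) - 1) / ((p : ℝ) ^ ((μ : ℝ) - 1) - 1)))) :=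
  stmt13_general k p ℓ hk hp ε hℓ hcong r hr g₁ hg₁ μ hμ S₁ S₂ hS₁ hS₂ α γ₁ hlim
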